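/- arXiv:2406.12097 — 3 statements merged into one kernel-verified Lean document; each statement's English description precedes it below -/
import Mathlib

section
/- There exists an absolute constant k₀ > 0 such that the following holds. Fix N ≥ 2, an N-ary tree V, and radially decaying weights with parameter ε ≤ k₀/N. Then for every w ∈ V one has 0 ≤ Ψ(w) < 2, and for any distinct leaves v,w ∈ ∂V with v < w one has 0 ≤ Ψ(v) < Ψ(w) < 2 (i.e., Ψ restricted to ∂V is strictly order preserving). -/
open MeasureTheory Set Metric
open scoped Classical

noncomputable section

abbrev Pt : Type := EuclideanSpace ℝ (Fin 2)

/-- The point `(a, b)` of the Euclidean plane. -/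
def pt (a b : ℝ) : Pt := WithLp.toLp 2 ![a, b]

/-- `V` is an `N`-ary tree: a finite prefix-closed set of strings over the alphabet
`{0, …, N−1}` containing the empty string (the root), in which every non-leaf node
has at least `2` (and, automatically, at most `N`) children. -/
def IsNaryTree (N : ℕ) (V : Finset (List ℕ)) : Prop :=
  [] ∈ V ∧
  (∀ v ∈ V, ∀ u : List ℕ, u <+: v → u ∈ V) ∧
  (∀ v ∈ V, ∀ i ∈ v, i < N) ∧
  (∀ v ∈ V, (∃ a : ℕ, v ++ [a] ∈ V) →
    2 ≤ ((Finset.range N).filter (fun a => v ++ [a] ∈ V)).card)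

/-- `v` is a leaf of `V`. -/
def IsLeaf (V : Finset (List ℕ)) (v : List ℕ) : Prop :=
  v ∈ V ∧ ∀ a : ℕ, v ++ [a] ∉ V

/-- The tree has depth at least one, i.e. the root is not a leaf. -/
def DepthAtLeastOne (V : Finset (List ℕ)) : Prop := ∃ a : ℕ, [a] ∈ V

/-- Radially decaying weights with parameter `ε` (with the convention `W ∅ = 1`). -/
def RadiallyDecaying (V : Finset (List ℕ)) (W : List ℕ → ℝ) (ε : ℝ) : Prop :=
  W [] = 1 ∧ (∀ v ∈ V, 0 < W v) ∧ ∀ v ∈ V, v ≠ [] → W v ≤ ε * W v.dropLast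

/-- The map `Ψ(v) = ∑_{i=1}^{d(v)} W(π_{i−1}(v))·v_i/(N−1)`. -/
def Psi (N : ℕ) (W : List ℕ → ℝ) (v : List ℕ) : ℝ :=
  ∑ i ∈ Finset.range v.length, W (v.take i) * (v.getD i 0 : ℝ) / ((N : ℝ) - 1)

/-- `Δ = min_{v ∈ ∂V} W_v`. -/
def Delta (V : Finset (List ℕ)) (W : List ℕ → ℝ) : ℝ :=
  sInf {w : ℝ | ∃ v, IsLeaf V v ∧ w = W v}

def E1set (Δ : ℝ) : Set Pt :=
  {x | (∃ n : ℤ, x 0 = (n : ℝ) * Δ) ∧ x 0 ∈ Ico (0 : ℝ) 2 ∧ x 1 = 0}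

def E2set (N : ℕ) (V : Finset (List ℕ)) (W : List ℕ → ℝ) : Set Pt :=
  {x | ∃ v, IsLeaf V v ∧ x = pt (Psi N W v) (W v)}

def Eset (N : ℕ) (V : Finset (List ℕ)) (W : List ℕ → ℝ) : Set Pt :=
  E1set (Delta V W) ∪ E2set N V W

/-- Bundle of standing hypotheses: `N ≥ 2`, `V` an `N`-ary tree, `0 < ε ≤ k₀/N`,
and radially decaying weights with parameter `ε`. -/
def TreeHyp (k₀ : ℝ) (N : ℕ) (V : Finset (List ℕ)) (W : List ℕ → ℝ) (ε : ℝ) : Prop :=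
  2 ≤ N ∧ IsNaryTree N V ∧ 0 < ε ∧ ε ≤ k₀ / N ∧ RadiallyDecaying V W ε

/-- Distance between two subsets of the plane. -/
def setDist (s t : Set Pt) : ℝ := sInf {d : ℝ | ∃ x ∈ s, ∃ y ∈ t, d = dist x y}

/-- A dyadic square arising from `Q⁰ = [−3,5)²` by `k` repeated bisections. -/
structure DSquare where
  k : ℕ
  i : ℕ
  j : ℕ
  hi : i < 2 ^ k
  hj : j < 2 ^ k

namespace DSquare

def side (Q : DSquare) : ℝ := 8 / 2 ^ Q.k

def x0 (Q : DSquare) : ℝ := -3 + Q.i * Q.side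

def y0 (Q : DSquare) : ℝ := -3 + Q.j * Q.side

/-- The (half-open) square itself, as a subset of the plane. -/
def set (Q : DSquare) : Set Pt :=
  {x | x 0 ∈ Ico Q.x0 (Q.x0 + Q.side) ∧ x 1 ∈ Ico Q.y0 (Q.y0 + Q.side)}

/-- The concentric dilate `λQ`. -/
def dil (Q : DSquare) (lam : ℝ) : Set Pt :=
  {x | |x 0 - (Q.x0 + Q.side / 2)| ≤ lam * Q.side / 2 ∧
       |x 1 - (Q.y0 + Q.side / 2)| ≤ lam * Q.side / 2}

/-- The dyadic ancestor of `Q` at generation `k' ≤ Q.k`. -/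
def anc (Q : DSquare) (k' : ℕ) (h : k' ≤ Q.k) : DSquare :=
  ⟨k', Q.i / 2 ^ (Q.k - k'), Q.j / 2 ^ (Q.k - k'), by
      have h2 : 0 < 2 ^ (Q.k - k') := pow_pos (by norm_num) _
      rw [Nat.div_lt_iff_lt_mul h2, ← pow_add, Nat.add_sub_cancel' h]
      exact Q.hi, by
      have h2 : 0 < 2 ^ (Q.k - k') := pow_pos (by norm_num) _
      rw [Nat.div_lt_iff_lt_mul h2, ← pow_add, Nat.add_sub_cancel' h]
      exact Q.hj⟩

end DSquare

def Q0set : Set Pt := {x | x 0 ∈ Ico (-3 : ℝ) 5 ∧ x 1 ∈ Ico (-3 : ℝ) 5}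

/-- `Q` belongs to the Whitney decomposition `𝒲` of `Q⁰` relative to `E`:
`3Q ∩ E` has at most one point, while `3Q'' ∩ E` has at least two points for every
proper dyadic ancestor `Q''` of `Q`. -/
def InWhitney (E : Set Pt) (Q : DSquare) : Prop :=
  (Q.dil 3 ∩ E).Subsingleton ∧
  ∀ k' : ℕ, ∀ h : k' < Q.k, ¬ ((Q.anc k' h.le).dil 3 ∩ E).Subsingleton

/-- `Q ↔ Q'`, i.e. `1.1Q ∩ 1.1Q' ≠ ∅`. -/
def Touch (Q Q' : DSquare) : Prop := (Q.dil 1.1 ∩ Q'.dil 1.1).Nonempty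

/-- `‖F‖_{L^{2,p}(Ω)}^p = ∫_Ω |∇²F|^p`. -/
def sobEnergy (p : ℝ) (Ω : Set Pt) (F : Pt → ℝ) : ℝ :=
  ∫ x in Ω, ‖iteratedFDeriv ℝ 2 F x‖ ^ p

/-- The seminorm `‖F‖_{L^{2,p}(Ω)}`. -/
def sobNorm (p : ℝ) (Ω : Set Pt) (F : Pt → ℝ) : ℝ := sobEnergy p Ω F ^ (1 / p)

/-- Membership in the homogeneous Sobolev space `L^{2,p}(ℝ²)` (we work with `C²`
representatives with finite seminorm). -/
def MemSob (p : ℝ) (F : Pt → ℝ) : Prop :=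
  ContDiff ℝ 2 F ∧ Integrable fun x => ‖iteratedFDeriv ℝ 2 F x‖ ^ p

/-- The trace seminorm `‖f‖_{L^{2,p}(E)}` of `f : E → ℝ`. -/
def traceSobNorm (p : ℝ) (E : Set Pt) (f : E → ℝ) : ℝ :=
  sInf {c : ℝ | ∃ F : Pt → ℝ, MemSob p F ∧ (∀ y : E, F y.1 = f y) ∧ c = sobNorm p univ F}

/-- `T` is a linear extension operator `L^{2,p}(E) → L^{2,p}(ℝ²)` with norm bound `M`. -/
def IsExtOpPlane (p : ℝ) (E : Set Pt) (M : ℝ) (T : (E → ℝ) →ₗ[ℝ] (Pt → ℝ)) : Prop :=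
  ∀ f : E → ℝ, (∃ F : Pt → ℝ, MemSob p F ∧ ∀ y : E, F y.1 = f y) →
    MemSob p (T f) ∧ (∀ y : E, T f y.1 = f y) ∧
      sobNorm p univ (T f) ≤ M * traceSobNorm p E f

/-- `‖Φ‖_{L^{1,p}(V)}^p = ∑_{v ∈ V₀} |Φ(v) − Φ(π(v))|^p W_v^{2−p}`. -/
def treeEnergy (p : ℝ) (V : Finset (List ℕ)) (W : List ℕ → ℝ) (Φ : List ℕ → ℝ) : ℝ :=
  ∑ v ∈ V.erase [], |Φ v - Φ v.dropLast| ^ p * W v ^ (2 - p)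

def treeNorm (p : ℝ) (V : Finset (List ℕ)) (W : List ℕ → ℝ) (Φ : List ℕ → ℝ) : ℝ :=
  treeEnergy p V W Φ ^ (1 / p)

/-- The type of leaves of `V`. -/
def Leaves (V : Finset (List ℕ)) : Type := {v : List ℕ // IsLeaf V v}

/-- The trace seminorm `‖φ‖_{L^{1,p}(∂V)}`. -/
def treeTraceNorm (p : ℝ) (V : Finset (List ℕ)) (W : List ℕ → ℝ) (φ : Leaves V → ℝ) : ℝ :=
  sInf {c : ℝ | ∃ Φ : List ℕ → ℝ, (∀ v : Leaves V, Φ v.1 = φ v) ∧ c = treeNorm p V W Φ}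

/-- `H` is a linear extension operator `L^{1,p}(∂V) → L^{1,p}(V)` with norm bound `M`. -/
def IsExtOpTree (p : ℝ) (V : Finset (List ℕ)) (W : List ℕ → ℝ) (M : ℝ)
    (H : (Leaves V → ℝ) →ₗ[ℝ] (List ℕ → ℝ)) : Prop :=
  ∀ φ : Leaves V → ℝ,
    (∀ v : Leaves V, H φ v.1 = φ v) ∧ treeNorm p V W (H φ) ≤ M * treeTraceNorm p V W φ

/-- Longest common prefix of two strings (the lowest common ancestor). -/
def lcp : List ℕ → List ℕ → List ℕ
  | a :: as, b :: bs => if a = b then a :: lcp as bs else []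
  | _, _ => []

/-- The cluster `C_v ⊆ E₂` associated to a vertex `v ∈ V`. -/
def Cluster (N : ℕ) (V : Finset (List ℕ)) (W : List ℕ → ℝ) (v : List ℕ) : Set Pt :=
  {x | ∃ u, IsLeaf V u ∧ v <+: u ∧ x = pt (Psi N W u) (W u)}

/-- The average `(∂₂G)_S` of the vertical derivative of `G` over `S`. -/
def d2avg (S : Set Pt) (G : Pt → ℝ) : ℝ :=
  ⨍ x in S, fderiv ℝ G x (EuclideanSpace.single 1 1)

end

/-!
Ψ is a digit expansion: the children `p ++ [a]` of a node `p` split the interval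
`[Ψ(p), Ψ(p) + W_p·N/(N−1))` into `N` subintervals of length `W_p/(N−1)`, and the digit `a`
selects the `a`-th one. Because the weights decay geometrically with ratio `ε`, all later digits
of a string through `p ++ [a]` add at most `ε·W_p/(1−ε)`, which is `< W_p/(N−1)` once `εN < 1`,
so Ψ of the whole subtree below `p ++ [a]` stays inside that subinterval. Comparing two leaves at
their lowest common ancestor gives monotonicity, and summing the geometric series from the root
gives `Ψ ≤ 1/(1−ε) < 2`.
-/

theorem lcp_prefix_left_right : ∀ a b : List ℕ, lcp a b <+: a ∧ lcp a b <+: b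
  | a :: as, b :: bs => by
    by_cases h : a = b
    · subst h
      obtain ⟨hl, hr⟩ := lcp_prefix_left_right as bs
      simpa [lcp] using ⟨hl, hr⟩
    · simp [lcp, h]
  | [], _ => by simp [lcp]
  | _ :: _, [] => by simp [lcp]

noncomputable def psiTerm (N : ℕ) (W : List ℕ → ℝ) (v : List ℕ) (i : ℕ) : ℝ :=
  W (v.take i) * (v.getD i 0 : ℝ) / ((N : ℝ) - 1)

theorem Psi_eq_sum_psiTerm (N : ℕ) (W : List ℕ → ℝ) (v : List ℕ) :
    Psi N W v = ∑ i ∈ Finset.range v.length, psiTerm N W v i := rfl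

theorem Psi_eq_add_sum_Ico {N : ℕ} {W : List ℕ → ℝ} {p v : List ℕ} (h : p <+: v) :
    Psi N W v = Psi N W p + ∑ i ∈ Finset.Ico p.length v.length, psiTerm N W v i := by
  have hterm : ∀ i < p.length, psiTerm N W v i = psiTerm N W p i := by
    obtain ⟨s, rfl⟩ := h
    intro i hi
    rw [psiTerm, psiTerm, List.take_append_of_le_length hi.le, List.getD_append _ _ _ _ hi]
  rw [Psi_eq_sum_psiTerm, Psi_eq_sum_psiTerm, ← Finset.sum_range_add_sum_Ico _ h.length_le]
  congr 1
  exact Finset.sum_congr rfl fun i hi => hterm i (Finset.mem_range.mp hi)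

section Tree

variable {N : ℕ} {V : Finset (List ℕ)} {W : List ℕ → ℝ} {ε : ℝ} {v : List ℕ}

theorem IsNaryTree.mem_of_prefix (hV : IsNaryTree N V) (hv : v ∈ V) {p : List ℕ}
    (hp : p <+: v) : p ∈ V :=
  hV.2.1 v hv p hp

theorem IsNaryTree.take_mem (hV : IsNaryTree N V) (hv : v ∈ V) (i : ℕ) : v.take i ∈ V :=
  hV.mem_of_prefix hv (List.take_prefix i v)

theorem weight_take_add_le (hV : IsNaryTree N V) (hW : RadiallyDecaying V W ε) (hε : 0 ≤ ε)
    (hv : v ∈ V) (m : ℕ) :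
    ∀ k, m + k ≤ v.length → W (v.take (m + k)) ≤ ε ^ k * W (v.take m)
  | 0, _ => by simp
  | k + 1, hk => by
    have hne : v.take (m + k + 1) ≠ [] := by
      simpa [List.take_eq_nil_iff] using v.ne_nil_of_length_pos (by omega)
    have hparent : (v.take (m + k + 1)).dropLast = v.take (m + k) := by
      rw [List.dropLast_eq_take, List.take_take, List.length_take]
      congr 1
      omega
    calc W (v.take (m + (k + 1)))
        ≤ ε * W (v.take (m + k)) := hparent ▸ hW.2.2 _ (hV.take_mem hv _) hne
      _ ≤ ε * (ε ^ k * W (v.take m)) := by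
          gcongr
          exact weight_take_add_le hV hW hε hv m k (by omega)
      _ = ε ^ (k + 1) * W (v.take m) := by ring

theorem psiTerm_nonneg (hV : IsNaryTree N V) (hW : RadiallyDecaying V W ε) (hN : 1 ≤ N)
    (hv : v ∈ V) (i : ℕ) : 0 ≤ psiTerm N W v i := by
  have hN1 : (1 : ℝ) ≤ N := by exact_mod_cast hN
  have hWi := hW.2.1 _ (hV.take_mem hv i)
  have hN1' : (0 : ℝ) ≤ N - 1 := by linarith
  unfold psiTerm
  positivity

theorem psiTerm_le_weight (hV : IsNaryTree N V) (hW : RadiallyDecaying V W ε) (hN : 2 ≤ N)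
    (hv : v ∈ V) {i : ℕ} (hi : i < v.length) : psiTerm N W v i ≤ W (v.take i) := by
  have hdigit : v.getD i 0 + 1 ≤ N := by
    rw [List.getD_eq_getElem v 0 hi]
    exact hV.2.2.1 v hv _ (List.getElem_mem hi)
  have hdigit' : (v.getD i 0 : ℝ) ≤ N - 1 := by
    have : ((v.getD i 0 + 1 : ℕ) : ℝ) ≤ N := by exact_mod_cast hdigit
    push_cast at this
    linarith
  have hN1 : (0 : ℝ) < N - 1 := by
    have : (2 : ℝ) ≤ N := by exact_mod_cast hN
    linarith
  rw [psiTerm, div_le_iff₀ hN1]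
  exact mul_le_mul_of_nonneg_left hdigit' (hW.2.1 _ (hV.take_mem hv i)).le

theorem sum_Ico_psiTerm_le (hV : IsNaryTree N V) (hW : RadiallyDecaying V W ε) (hN : 2 ≤ N)
    (hε : 0 ≤ ε) (hε1 : ε < 1) (hv : v ∈ V) {m : ℕ} (hm : m ≤ v.length) :
    ∑ i ∈ Finset.Ico m v.length, psiTerm N W v i ≤ W (v.take m) / (1 - ε) := by
  rw [Finset.sum_Ico_eq_sum_range]
  calc ∑ k ∈ Finset.range (v.length - m), psiTerm N W v (m + k)
      ≤ ∑ k ∈ Finset.range (v.length - m), ε ^ k * W (v.take m) := by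
        refine Finset.sum_le_sum fun k hk => ?_
        have hk : m + k < v.length := by rw [Finset.mem_range] at hk; omega
        exact (psiTerm_le_weight hV hW hN hv hk).trans
          (weight_take_add_le hV hW hε hv m k hk.le)
    _ = (∑ k ∈ Finset.Ico 0 (v.length - m), ε ^ k) * W (v.take m) := by
        rw [Finset.range_eq_Ico, Finset.sum_mul]
    _ ≤ ε ^ 0 / (1 - ε) * W (v.take m) := by
        gcongr
        · exact (hW.2.1 _ (hV.take_mem hv m)).le
        · exact geom_sum_Ico_le_of_lt_one hε hε1
    _ = W (v.take m) / (1 - ε) := by ring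

theorem Psi_add_le_of_prefix (hV : IsNaryTree N V) (hW : RadiallyDecaying V W ε) (hN : 1 ≤ N)
    (hv : v ∈ V) {p : List ℕ} (hp : p <+: v) :
    Psi N W p + W p * (v.getD p.length 0 : ℝ) / ((N : ℝ) - 1) ≤ Psi N W v := by
  rw [Psi_eq_add_sum_Ico hp]
  rcases hp.length_le.lt_or_eq with hlt | heq
  · rw [Finset.sum_eq_sum_Ico_succ_bot hlt]
    have htail := Finset.sum_nonneg fun i (_ : i ∈ Finset.Ico (p.length + 1) v.length) =>
      psiTerm_nonneg hV hW hN hv i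
    have hhead : psiTerm N W v p.length = W p * (v.getD p.length 0 : ℝ) / ((N : ℝ) - 1) := by
      rw [psiTerm, ← List.prefix_iff_eq_take.mp hp]
    linarith
  · simp [heq]

theorem Psi_lt_add_of_prefix (hV : IsNaryTree N V) (hW : RadiallyDecaying V W ε) (hN : 2 ≤ N)
    (hε : 0 ≤ ε) (hεN : ε * N < 1) (hv : v ∈ V) {p : List ℕ} (hp : p <+: v) :
    Psi N W v < Psi N W p + W p * ((v.getD p.length 0 : ℝ) + 1) / ((N : ℝ) - 1) := by
  have hNR : (2 : ℝ) ≤ N := by exact_mod_cast hN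
  have hε1 : ε < 1 := by nlinarith
  have hWp : 0 < W p := hW.2.1 p (hV.mem_of_prefix hv hp)
  have hN1 : (0 : ℝ) < N - 1 := by linarith
  rw [Psi_eq_add_sum_Ico hp]
  rcases hp.length_le.lt_or_eq with hlt | heq
  · rw [Finset.sum_eq_sum_Ico_succ_bot hlt]
    have hhead : psiTerm N W v p.length = W p * (v.getD p.length 0 : ℝ) / ((N : ℝ) - 1) := by
      rw [psiTerm, ← List.prefix_iff_eq_take.mp hp]
    have htail :
        ∑ i ∈ Finset.Ico (p.length + 1) v.length, psiTerm N W v i < W p / ((N : ℝ) - 1) :=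
      calc ∑ i ∈ Finset.Ico (p.length + 1) v.length, psiTerm N W v i
          ≤ W (v.take (p.length + 1)) / (1 - ε) := sum_Ico_psiTerm_le hV hW hN hε hε1 hv hlt
        _ ≤ ε * W p / (1 - ε) := by
            have hchild := weight_take_add_le hV hW hε hv p.length 1 hlt
            rw [pow_one, ← List.prefix_iff_eq_take.mp hp] at hchild
            gcongr
        _ < W p / ((N : ℝ) - 1) := by
            rw [div_lt_div_iff₀ (by linarith) hN1]
            nlinarith
    rw [hhead, mul_add, add_div, mul_one]
    linarith
  · simp only [heq, Finset.Ico_self, Finset.sum_empty, add_zero]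
    have : 0 < W p * ((v.getD v.length 0 : ℝ) + 1) / ((N : ℝ) - 1) := by positivity
    linarith

theorem Psi_nonneg (hV : IsNaryTree N V) (hW : RadiallyDecaying V W ε) (hN : 1 ≤ N)
    (hv : v ∈ V) : 0 ≤ Psi N W v :=
  Finset.sum_nonneg fun i _ => psiTerm_nonneg hV hW hN hv i

theorem Psi_le_one_div_one_sub (hV : IsNaryTree N V) (hW : RadiallyDecaying V W ε) (hN : 2 ≤ N)
    (hε : 0 ≤ ε) (hε1 : ε < 1) (hv : v ∈ V) : Psi N W v ≤ 1 / (1 - ε) := by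
  have h := sum_Ico_psiTerm_le hV hW hN hε hε1 hv (Nat.zero_le v.length)
  rwa [← Finset.range_eq_Ico, ← Psi_eq_sum_psiTerm, List.take_zero, hW.1] at h

end Tree

/-- part of Lemma 2 of the paper: `0 ≤ Ψ < 2` on `V`, and `Ψ`
restricted to the leaves is strictly order preserving. -/
theorem statement2 :
    ∃ k₀ : ℝ, 0 < k₀ ∧
      ∀ (N : ℕ) (V : Finset (List ℕ)) (W : List ℕ → ℝ) (ε : ℝ),
        TreeHyp k₀ N V W ε →
          (∀ w ∈ V, 0 ≤ Psi N W w ∧ Psi N W w < 2) ∧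
          (∀ v w : List ℕ, IsLeaf V v → IsLeaf V w → v ≠ w →
            v.getD (lcp v w).length 0 < w.getD (lcp v w).length 0 →
            Psi N W v < Psi N W w) := by
  refine ⟨1 / 2, by norm_num, fun N V W ε ⟨hN, hV, hε, hεk, hW⟩ => ?_⟩
  have hNR : (2 : ℝ) ≤ N := by exact_mod_cast hN
  have hεN : ε * N ≤ 1 / 2 := (le_div_iff₀ (by linarith)).mp hεk
  have hN1 : 1 ≤ N := one_le_two.trans hN
  refine ⟨fun w hw => ⟨Psi_nonneg hV hW hN1 hw, ?_⟩, fun v w hv hw _ hdigit => ?_⟩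
  · calc Psi N W w ≤ 1 / (1 - ε) := Psi_le_one_div_one_sub hV hW hN hε.le (by nlinarith) hw
      _ < 2 := by rw [div_lt_iff₀ (by nlinarith)]; nlinarith
  · obtain ⟨hpv, hpw⟩ := lcp_prefix_left_right v w
    set p := lcp v w
    have hWp : 0 < W p := hW.2.1 p (hV.mem_of_prefix hw.1 hpw)
    calc Psi N W v < Psi N W p + W p * ((v.getD p.length 0 : ℝ) + 1) / ((N : ℝ) - 1) :=
          Psi_lt_add_of_prefix hV hW hN hε.le (by linarith) hv.1 hpv
      _ ≤ Psi N W p + W p * (w.getD p.length 0 : ℝ) / ((N : ℝ) - 1) := by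
          gcongr
          · linarith
          · exact_mod_cast hdigit
      _ ≤ Psi N W w := Psi_add_le_of_prefix hV hW hN1 hw.1 hpw
end

section
/- There exist absolute constants k₀ > 0 and K > 1 such that the following holds. Fix N ≥ 2, an N-ary tree V, and radially decaying weights with parameter ε ≤ k₀/N. Then for any distinct leaves v,w ∈ ∂V, K^{−1}·W_{lca(v,w)}/N ≤ |Ψ(w) − Ψ(v)| ≤ K·W_{lca(v,w)}. -/
open MeasureTheory Set Metric
open scoped Classical

/-
Let `u = lca(v, w)` and `m = d(u)`. For a leaf `x` below `u`, `Ψ(x)` is `Ψ(u)`, plus the digit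
term `W_u x_m / (N − 1)`, plus a tail. Each increment of `Ψ` is at most the current weight and the
weights decay by `ε ≤ 1/2`, so the tail lies in `[0, 2ε W_u]`. As `v_m ≠ w_m`, the digit terms of
`v` and `w` differ by between `W_u / (N − 1)` and `W_u`, and for `ε ≤ 1/(4N)` the tails change
this by at most `W_u / (2N)`.
-/

lemma lcp_cons_self (a : ℕ) (v w : List ℕ) : lcp (a :: v) (a :: w) = a :: lcp v w := by
  simp [lcp]

lemma lcp_prefix_left_and_right : ∀ v w : List ℕ, lcp v w <+: v ∧ lcp v w <+: w
  | a :: v, b :: w => by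
    by_cases hab : a = b
    · subst hab
      obtain ⟨hv, hw⟩ := lcp_prefix_left_and_right v w
      rw [lcp_cons_self]
      exact ⟨(List.prefix_cons_inj _).mpr hv, (List.prefix_cons_inj _).mpr hw⟩
    · simp [lcp, hab]
  | [], _ => by simp [lcp]
  | _ :: _, [] => by simp [lcp]

lemma getD_length_lcp_ne : ∀ {v w : List ℕ}, ¬ v <+: w → ¬ w <+: v →
    v.getD (lcp v w).length 0 ≠ w.getD (lcp v w).length 0
  | a :: v, b :: w, hvw, hwv => by
    by_cases hab : a = b
    · subst hab
      rw [lcp_cons_self]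
      exact getD_length_lcp_ne (fun h => hvw ((List.prefix_cons_inj _).mpr h))
        (fun h => hwv ((List.prefix_cons_inj _).mpr h))
    · simp [lcp, hab]
  | [], _, hvw, _ => absurd List.nil_prefix hvw
  | _ :: _, [], _, hwv => absurd List.nil_prefix hwv

lemma length_lt_of_prefix_of_not_prefix {u v w : List ℕ} (huv : u <+: v) (huw : u <+: w)
    (hvw : ¬ v <+: w) : u.length < v.length :=
  lt_of_le_of_ne huv.length_le fun h => hvw (huv.eq_of_length h ▸ huw)

lemma IsLeaf.not_prefix {N : ℕ} {V : Finset (List ℕ)} (hV : IsNaryTree N V) {v w : List ℕ}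
    (hv : IsLeaf V v) (hw : w ∈ V) (hne : v ≠ w) : ¬ v <+: w := by
  intro hvw
  have hlt : v.length < w.length := lt_of_le_of_ne hvw.length_le fun h => hne (hvw.eq_of_length h)
  have hchild : w.take (v.length + 1) ∈ V := hV.2.1 w hw _ (List.take_prefix _ _)
  rw [List.take_add_one, ← List.prefix_iff_eq_take.mp hvw, List.getElem?_eq_getElem hlt] at hchild
  exact hv.2 _ hchild

lemma Psi_take (N : ℕ) (W : List ℕ → ℝ) (x : List ℕ) (k : ℕ) :
    Psi N W (x.take k) =
      ∑ i ∈ Finset.range (min k x.length), W (x.take i) * (x.getD i 0 : ℝ) / ((N : ℝ) - 1) := by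
  rw [Psi, List.length_take]
  refine Finset.sum_congr rfl fun i hi => ?_
  have hik : i < k := lt_of_lt_of_le (Finset.mem_range.mp hi) (min_le_left _ _)
  rw [List.take_take, min_eq_left hik.le]
  simp [List.getD_eq_getElem?_getD, hik]

lemma Psi_take_succ (N : ℕ) (W : List ℕ → ℝ) {x : List ℕ} {n : ℕ} (hn : n < x.length) :
    Psi N W (x.take (n + 1)) =
      Psi N W (x.take n) + W (x.take n) * (x.getD n 0 : ℝ) / ((N : ℝ) - 1) := by
  rw [Psi_take, Psi_take, min_eq_left hn, min_eq_left hn.le, Finset.sum_range_succ]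

section Tree

variable {N : ℕ} {V : Finset (List ℕ)} {W : List ℕ → ℝ} {ε : ℝ}

lemma IsNaryTree.take_mem_s3 (hV : IsNaryTree N V) {x : List ℕ} (hx : x ∈ V) (n : ℕ) :
    x.take n ∈ V :=
  hV.2.1 x hx _ (List.take_prefix _ _)

lemma IsNaryTree.getD_lt (hV : IsNaryTree N V) {x : List ℕ} (hx : x ∈ V) {n : ℕ}
    (hn : n < x.length) : x.getD n 0 < N := by
  rw [List.getD_eq_getElem x 0 hn]
  exact hV.2.2.1 x hx _ (List.getElem_mem hn)

lemma RadiallyDecaying.take_succ_le (hV : IsNaryTree N V) (hW : RadiallyDecaying V W ε)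
    {x : List ℕ} (hx : x ∈ V) {n : ℕ} (hn : n < x.length) :
    W (x.take (n + 1)) ≤ ε * W (x.take n) := by
  have hne : x.take (n + 1) ≠ [] := List.ne_nil_of_length_pos (by simp; omega)
  have hparent : (x.take (n + 1)).dropLast = x.take n := by
    rw [List.dropLast_eq_take, List.take_take, List.length_take]
    congr 1
    omega
  simpa only [hparent] using hW.2.2 _ (hV.take_mem_s3 hx _) hne

lemma Psi_take_succ_sub_mem_Icc (hN : 2 ≤ N) (hV : IsNaryTree N V) (hW : RadiallyDecaying V W ε)
    {x : List ℕ} (hx : x ∈ V) {n : ℕ} (hn : n < x.length) :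
    Psi N W (x.take (n + 1)) - Psi N W (x.take n) ∈ Set.Icc 0 (W (x.take n)) := by
  have hN1 : (0 : ℝ) < N - 1 := by
    have : (2 : ℝ) ≤ N := by exact_mod_cast hN
    linarith
  have hdigit : (x.getD n 0 : ℝ) ≤ N - 1 := by
    have : ((x.getD n 0 + 1 : ℕ) : ℝ) ≤ N := by exact_mod_cast hV.getD_lt hx hn
    push_cast at this
    linarith
  have hWn : 0 < W (x.take n) := hW.2.1 _ (hV.take_mem_s3 hx n)
  rw [Psi_take_succ N W hn, add_sub_cancel_left, Set.mem_Icc, div_le_iff₀ hN1]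
  exact ⟨by positivity, mul_le_mul_of_nonneg_left hdigit hWn.le⟩

lemma Psi_sub_Psi_take_mem_Icc (hN : 2 ≤ N) (hV : IsNaryTree N V) (hW : RadiallyDecaying V W ε)
    (hε : ε ≤ 1 / 2) {x : List ℕ} (hx : x ∈ V) {n : ℕ} (hn : n ≤ x.length) :
    Psi N W x - Psi N W (x.take n) ∈ Set.Icc 0 (2 * W (x.take n)) := by
  induction hn using Nat.decreasingInduction with
  | self =>
    rw [List.take_length, sub_self]
    exact ⟨le_rfl, by linarith [hW.2.1 x hx]⟩
  | of_succ n hlt ih =>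
    obtain ⟨h₁, h₂⟩ := ih
    obtain ⟨h₃, h₄⟩ := Psi_take_succ_sub_mem_Icc hN hV hW hx hlt
    have h₅ := hW.take_succ_le hV hx hlt
    have hWn := hW.2.1 _ (hV.take_mem_s3 hx n)
    constructor <;> nlinarith

lemma Psi_sub_Psi_take_sub_mem_Icc (hN : 2 ≤ N) (hV : IsNaryTree N V)
    (hW : RadiallyDecaying V W ε) (hε : ε ≤ 1 / 2) {x : List ℕ} (hx : x ∈ V) {n : ℕ}
    (hn : n < x.length) :
    Psi N W x - (Psi N W (x.take n) + W (x.take n) * (x.getD n 0 : ℝ) / ((N : ℝ) - 1)) ∈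
      Set.Icc 0 (2 * ε * W (x.take n)) := by
  rw [← Psi_take_succ N W hn]
  obtain ⟨h₁, h₂⟩ := Psi_sub_Psi_take_mem_Icc hN hV hW hε hx hn
  have h₃ := hW.take_succ_le hV hx hn
  exact ⟨h₁, by linarith⟩

lemma abs_Psi_sub_Psi_sub_le (hN : 2 ≤ N) (hV : IsNaryTree N V) (hW : RadiallyDecaying V W ε)
    (hε : ε ≤ 1 / 2) {u x y : List ℕ} (hx : x ∈ V) (hy : y ∈ V) (hux : u <+: x) (huy : u <+: y)
    (hmx : u.length < x.length) (hmy : u.length < y.length) :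
    |Psi N W y - Psi N W x - W u * ((y.getD u.length 0 : ℝ) - x.getD u.length 0) / ((N : ℝ) - 1)|
      ≤ 2 * ε * W u := by
  obtain ⟨hx₁, hx₂⟩ := Psi_sub_Psi_take_sub_mem_Icc hN hV hW hε hx hmx
  obtain ⟨hy₁, hy₂⟩ := Psi_sub_Psi_take_sub_mem_Icc hN hV hW hε hy hmy
  rw [← List.prefix_iff_eq_take.mp hux] at hx₁ hx₂
  rw [← List.prefix_iff_eq_take.mp huy] at hy₁ hy₂
  rw [mul_sub, sub_div, abs_le]
  constructor <;> linarith

end Tree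

lemma abs_natCast_sub_natCast_mem_Icc {a b N : ℕ} (hab : a ≠ b) (ha : a < N) (hb : b < N) :
    |(a : ℝ) - b| ∈ Set.Icc 1 ((N : ℝ) - 1) := by
  have ha' : (a : ℝ) + 1 ≤ N := by exact_mod_cast ha
  have hb' : (b : ℝ) + 1 ≤ N := by exact_mod_cast hb
  rcases lt_or_gt_of_ne hab with h | h
  · have h' : (a : ℝ) + 1 ≤ b := by exact_mod_cast h
    rw [abs_of_neg (by linarith)]
    constructor <;> linarith [(a.cast_nonneg : (0 : ℝ) ≤ a)]
  · have h' : (b : ℝ) + 1 ≤ a := by exact_mod_cast h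
    rw [abs_of_pos (by linarith)]
    constructor <;> linarith [(b.cast_nonneg : (0 : ℝ) ≤ b)]

lemma abs_mul_div_add_mem_Icc {n a d r : ℝ} (hn : 2 ≤ n) (ha : 0 ≤ a) (hd₁ : 1 ≤ |d|)
    (hd₂ : |d| ≤ n - 1) (hr : |r| ≤ a / (2 * n)) :
    2⁻¹ * a / n ≤ |a * d / (n - 1) + r| ∧ |a * d / (n - 1) + r| ≤ 2 * a := by
  have hn₁ : 0 < n - 1 := by linarith
  have hmain : |a * d / (n - 1)| ∈ Set.Icc (a / n) a := by
    rw [abs_div, abs_mul, abs_of_nonneg ha, abs_of_pos hn₁, Set.mem_Icc,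
      div_le_div_iff₀ (by linarith) hn₁, div_le_iff₀ hn₁]
    exact ⟨by nlinarith [mul_le_mul_of_nonneg_left hd₁ ha],
      by nlinarith [mul_le_mul_of_nonneg_left hd₂ ha]⟩
  have hr' : a / (2 * n) ≤ a := div_le_self ha (by linarith)
  have hhalf : 2⁻¹ * a / n = a / n - a / (2 * n) := by field_simp; ring
  constructor
  · linarith [abs_sub_abs_le_abs_add (a * d / (n - 1)) r, hmain.1]
  · linarith [abs_add_le (a * d / (n - 1)) r, hmain.2]

/-- part of Lemma 2 of the paper: two-sided bound on `|Ψ(w) − Ψ(v)|`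
in terms of the weight of the lowest common ancestor. -/
theorem statement3 :
    ∃ k₀ K : ℝ, 0 < k₀ ∧ 1 < K ∧
      ∀ (N : ℕ) (V : Finset (List ℕ)) (W : List ℕ → ℝ) (ε : ℝ),
        TreeHyp k₀ N V W ε →
          ∀ v w : List ℕ, IsLeaf V v → IsLeaf V w → v ≠ w →
            K⁻¹ * W (lcp v w) / N ≤ |Psi N W w - Psi N W v| ∧
            |Psi N W w - Psi N W v| ≤ K * W (lcp v w) := by
  refine ⟨1 / 4, 2, by norm_num, by norm_num, ?_⟩
  rintro N V W ε ⟨hN, hV, -, hεN, hW⟩ v w hv hw hne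
  have hN' : (2 : ℝ) ≤ N := by exact_mod_cast hN
  have hεN' : 4 * ε * N ≤ 1 := by rw [le_div_iff₀ (by positivity)] at hεN; linarith
  have hε : ε ≤ 1 / 2 := by nlinarith
  obtain ⟨huv, huw⟩ := lcp_prefix_left_and_right v w
  have hvw := hv.not_prefix hV hw.1 hne
  have hwv := hw.not_prefix hV hv.1 hne.symm
  have hmv := length_lt_of_prefix_of_not_prefix huv huw hvw
  have hmw := length_lt_of_prefix_of_not_prefix huw huv hwv
  obtain ⟨hd₁, hd₂⟩ := abs_natCast_sub_natCast_mem_Icc (getD_length_lcp_ne hvw hwv).symm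
    (hV.getD_lt hw.1 hmw) (hV.getD_lt hv.1 hmv)
  have hWu : 0 < W (lcp v w) := hW.2.1 _ (hV.2.1 v hv.1 _ huv)
  have hr := abs_Psi_sub_Psi_sub_le hN hV hW hε hv.1 hw.1 huv huw hmv hmw
  have hεW : 2 * ε * W (lcp v w) ≤ W (lcp v w) / (2 * N) := by
    rw [le_div_iff₀ (by positivity)]
    nlinarith
  simpa only [add_sub_cancel] using
    abs_mul_div_add_mem_Icc hN' hWu.le hd₁ hd₂ (hr.trans hεW)
end

section
/- There exists an absolute constant k₀ > 0 such that the following holds. Fix N ≥ 2, an N-ary tree V of depth L ≥ 1, and radially decaying weights with parameter ε ≤ k₀/N, and let E = E₁ ∪ E₂ be the associated set. Then for every x = (x⁽¹⁾, x⁽²⁾) ∈ E₂: (a) Δ ≤ x⁽²⁾ ≤ dist(x, E₁) ≤ 2·x⁽²⁾; and (b) Δ ≤ x⁽²⁾ ≤ dist(x, E₂ \ {x}). -/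
open MeasureTheory Set Metric
open scoped Classical

/-!
Leaves `u ≠ v` branch at their lowest common ancestor `c` into distinct children, whose
`Ψ`-values differ by at least `W_c/(N−1)`. Below a vertex `p`, `Ψ` moves by at most the
geometric sum `W_p (1 + ε + ε² + ⋯) = W_p/(1−ε)`, which for `ε ≲ 1/N` is small compared with
`W_c/(N−1)`, while `W_v ≤ ε W_c`; hence `|Ψ(u) − Ψ(v)| ≥ W_v`. The same geometric bound gives
`0 ≤ Ψ < 2`, so the height `W_v ≥ Δ` of a point of `E₂` controls its distance to the grid `E₁`
of mesh `Δ` from both sides.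
-/

theorem List.exists_eq_append_cons_of_not_prefix :
    ∀ {u v : List ℕ}, ¬ u <+: v → ¬ v <+: u →
      ∃ c a b s t, a ≠ b ∧ u = c ++ a :: s ∧ v = c ++ b :: t
  | [], _, h, _ | _ :: _, [], _, h => absurd List.nil_prefix h
  | a :: u, b :: v, huv, hvu => by
    by_cases hab : a = b
    · subst hab
      obtain ⟨c, a', b', s, t, hne, rfl, rfl⟩ := exists_eq_append_cons_of_not_prefix
        (fun h => huv (List.cons_prefix_cons.2 ⟨rfl, h⟩))
        (fun h => hvu (List.cons_prefix_cons.2 ⟨rfl, h⟩))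
      exact ⟨a :: c, a', b', s, t, hne, rfl, rfl⟩
    · exact ⟨[], a, b, u, v, hab, rfl, rfl⟩

@[simp] lemma pt_zero (a b : ℝ) : pt a b 0 = a := rfl

@[simp] lemma pt_one (a b : ℝ) : pt a b 1 = b := rfl

lemma abs_sub_apply_le_dist (x y : Pt) (i : Fin 2) : |x i - y i| ≤ dist x y :=
  PiLp.dist_apply_le x y i

lemma dist_pt_pt (a b c d : ℝ) : dist (pt a b) (pt c d) = √((a - c) ^ 2 + (b - d) ^ 2) := by
  simp [EuclideanSpace.dist_eq, Fin.sum_univ_two, Real.dist_eq, sq_abs]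

lemma le_infDist_E1set (x : Pt) (Δ : ℝ) : x 1 ≤ infDist x (E1set Δ) := by
  have hne : pt 0 0 ∈ E1set Δ := ⟨⟨0, by simp⟩, by simp, rfl⟩
  refine (le_infDist ⟨_, hne⟩).2 fun y hy => ?_
  calc x 1 = x 1 - y 1 := by rw [hy.2.2, sub_zero]
    _ ≤ |x 1 - y 1| := le_abs_self _
    _ ≤ dist x y := abs_sub_apply_le_dist x y 1

lemma infDist_pt_E1set_le {Δ a b : ℝ} (hΔ : 0 < Δ) (ha₀ : 0 ≤ a) (ha₂ : a < 2) (hb : Δ ≤ b) :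
    infDist (pt a b) (E1set Δ) ≤ 2 * b := by
  set n := ⌊a / Δ⌋
  have hn_le : n * Δ ≤ a := (le_div_iff₀ hΔ).1 (Int.floor_le _)
  have hlt_n : a < (n + 1) * Δ := (div_lt_iff₀ hΔ).1 (Int.lt_floor_add_one _)
  have hn : pt (n * Δ) 0 ∈ E1set Δ :=
    ⟨⟨n, rfl⟩, ⟨mul_nonneg (by exact_mod_cast Int.floor_nonneg.2 (div_nonneg ha₀ hΔ.le)) hΔ.le,
      hn_le.trans_lt ha₂⟩, rfl⟩
  refine (infDist_le_dist_of_mem hn).trans ?_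
  rw [dist_pt_pt, Real.sqrt_le_left (by linarith)]
  nlinarith

section Tree

variable {N : ℕ} {V : Finset (List ℕ)} {W : List ℕ → ℝ} {ε : ℝ}

lemma exists_isLeaf_prefix {v : List ℕ} (hv : v ∈ V) : ∃ u, IsLeaf V u ∧ v <+: u := by
  obtain ⟨u, hu, hmax⟩ := (V.filter (v <+: ·)).exists_max_image List.length ⟨v, by simp [hv]⟩
  rw [Finset.mem_filter] at hu
  refine ⟨u, ⟨hu.1, fun a ha => ?_⟩, hu.2⟩
  have := hmax (u ++ [a]) (Finset.mem_filter.2 ⟨ha, hu.2.trans (List.prefix_append _ _)⟩)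
  simp at this

lemma IsLeaf.not_prefix_s5 (hV : ∀ v ∈ V, ∀ u, u <+: v → u ∈ V) {u v : List ℕ} (hu : IsLeaf V u)
    (hv : v ∈ V) (huv : u ≠ v) : ¬ u <+: v := by
  rintro ⟨_ | ⟨a, t⟩, rfl⟩
  · exact huv (List.append_nil u).symm
  · exact hu.2 a (hV _ hv _ ⟨t, by simp⟩)

lemma exists_isLeaf_ne (hV : IsNaryTree N V) (hD : DepthAtLeastOne V) (v : List ℕ) :
    ∃ u, IsLeaf V u ∧ u ≠ v := by
  obtain ⟨a₀, ha₀⟩ := hD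
  have hcard := hV.2.2.2 [] hV.1 ⟨a₀, ha₀⟩
  obtain ⟨a, ha, b, hb, hab⟩ := Finset.one_lt_card.1 hcard
  simp only [Finset.mem_filter, List.nil_append] at ha hb
  obtain ⟨u₁, hu₁, s, rfl⟩ := exists_isLeaf_prefix ha.2
  obtain ⟨u₂, hu₂, t, rfl⟩ := exists_isLeaf_prefix hb.2
  by_cases h : [a] ++ s = v
  · exact ⟨_, hu₂, fun h' => hab (List.cons.inj (h.trans h'.symm)).1⟩
  · exact ⟨_, hu₁, h⟩

lemma finite_leaf_weights : {w | ∃ v, IsLeaf V v ∧ w = W v}.Finite :=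
  (V.finite_toSet.image W).subset fun _ ⟨v, hv, hw⟩ => ⟨v, hv.1, hw.symm⟩

lemma Delta_le {v : List ℕ} (hv : IsLeaf V v) : Delta V W ≤ W v :=
  csInf_le finite_leaf_weights.bddBelow ⟨v, hv, rfl⟩

lemma Delta_pos (hroot : [] ∈ V) (hRD : RadiallyDecaying V W ε) : 0 < Delta V W := by
  obtain ⟨u, hu, -⟩ := exists_isLeaf_prefix hroot
  obtain ⟨v, hv, hΔ⟩ :=
    Set.Nonempty.csInf_mem (s := {w | ∃ v, IsLeaf V v ∧ w = W v}) ⟨W u, u, hu, rfl⟩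
      finite_leaf_weights
  rw [Delta, hΔ]
  exact hRD.2.1 v hv.1

lemma W_take_add_le (hV : ∀ v ∈ V, ∀ u, u <+: v → u ∈ V) (hRD : RadiallyDecaying V W ε)
    (hε : 0 ≤ ε) {u : List ℕ} (hu : u ∈ V) (i : ℕ) :
    ∀ k, i + k ≤ u.length → W (u.take (i + k)) ≤ ε ^ k * W (u.take i)
  | 0, _ => by simp
  | k + 1, hk => by
    have hmem : u.take (i + k + 1) ∈ V := hV u hu _ (List.take_prefix _ _)
    have hlen : (u.take (i + k + 1)).length = i + k + 1 := by
      rw [List.length_take]; omega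
    have hstep := hRD.2.2 _ hmem (List.ne_nil_of_length_pos (by omega))
    rw [List.dropLast_eq_take, hlen, Nat.add_sub_cancel, List.take_take, min_eq_left (by omega)]
      at hstep
    calc W (u.take (i + (k + 1))) ≤ ε * W (u.take (i + k)) := hstep
      _ ≤ ε * (ε ^ k * W (u.take i)) := by gcongr; exact W_take_add_le hV hRD hε hu i k (by omega)
      _ = ε ^ (k + 1) * W (u.take i) := by ring

lemma Psi_sub_Psi_take (w : List ℕ) {d : ℕ} (hd : d ≤ w.length) :
    Psi N W w - Psi N W (w.take d) =
      ∑ i ∈ Finset.Ico d w.length, W (w.take i) * (w.getD i 0 : ℝ) / ((N : ℝ) - 1) := by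
  have hhead : Psi N W (w.take d) =
      ∑ i ∈ Finset.range d, W (w.take i) * (w.getD i 0 : ℝ) / ((N : ℝ) - 1) := by
    rw [Psi, List.length_take, min_eq_left hd]
    refine Finset.sum_congr rfl fun i hi => ?_
    have hi : i < d := Finset.mem_range.1 hi
    rw [List.take_take, min_eq_left hi.le, List.getD_eq_getElem?_getD,
      List.getD_eq_getElem?_getD, List.getElem?_take_of_lt hi]
  rw [hhead, Psi, ← Finset.sum_range_add_sum_Ico _ hd, add_sub_cancel_left]

lemma Psi_append_singleton (p : List ℕ) (a : ℕ) :
    Psi N W (p ++ [a]) = Psi N W p + W p * a / ((N : ℝ) - 1) := by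
  have h := Psi_sub_Psi_take (N := N) (W := W) (p ++ [a]) (d := p.length) (by simp)
  simp only [List.take_left', List.length_append, List.length_singleton, Nat.Ico_succ_singleton,
    Finset.sum_singleton, List.getD_eq_getElem?_getD, List.getElem?_concat_length,
    Option.getD_some] at h
  linarith

lemma div_le_abs_Psi_append_sub (hN : 2 ≤ N) {c : List ℕ} (hWc : 0 ≤ W c) {a b : ℕ}
    (hab : a ≠ b) : W c / (N - 1) ≤ |Psi N W (c ++ [a]) - Psi N W (c ++ [b])| := by
  have hN₁ : (0 : ℝ) < N - 1 := by
    have : (2 : ℝ) ≤ N := by exact_mod_cast hN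
    linarith
  have hab' : (1 : ℝ) ≤ |(a : ℝ) - b| := by
    have : (1 : ℤ) ≤ |(a : ℤ) - b| := Int.one_le_abs (sub_ne_zero.2 (by exact_mod_cast hab))
    exact_mod_cast this
  rw [Psi_append_singleton, Psi_append_singleton, add_sub_add_left_eq_sub, ← sub_div, ← mul_sub,
    abs_div, abs_mul, abs_of_nonneg hWc, abs_of_pos hN₁]
  gcongr
  exact le_mul_of_one_le_right hWc hab'

lemma getD_add_one_le (hV : IsNaryTree N V) (hN : 1 ≤ N) {u : List ℕ} (hu : u ∈ V) (i : ℕ) :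
    u.getD i 0 + 1 ≤ N := by
  rw [List.getD_eq_getElem?_getD]
  cases h : u[i]? with
  | none => simpa using hN
  | some a => simpa using hV.2.2.1 u hu a (List.mem_of_getElem? h)

lemma Psi_mem_Icc_of_prefix (hN : 2 ≤ N) (hV : IsNaryTree N V) (hRD : RadiallyDecaying V W ε)
    (hε₀ : 0 ≤ ε) (hε₁ : ε < 1) {p u : List ℕ} (hu : u ∈ V) (hp : p <+: u) :
    Psi N W u ∈ Set.Icc (Psi N W p) (Psi N W p + W p / (1 - ε)) := by
  obtain ⟨d, hd, rfl⟩ : ∃ d ≤ u.length, p = u.take d :=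
    ⟨_, hp.length_le, List.prefix_iff_eq_take.1 hp⟩
  have hN₁ : (0 : ℝ) < N - 1 := by
    have : (2 : ℝ) ≤ N := by exact_mod_cast hN
    linarith
  have hW : ∀ i, 0 < W (u.take i) := fun i => hRD.2.1 _ (hV.2.1 u hu _ (List.take_prefix _ _))
  have hletter : ∀ i, (u.getD i 0 : ℝ) / (N - 1) ∈ Set.Icc 0 1 := fun i => by
    have : (u.getD i 0 : ℝ) + 1 ≤ N := by exact_mod_cast getD_add_one_le hV (by omega) hu i
    exact ⟨by positivity, (div_le_one hN₁).2 (by linarith)⟩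
  have hsum := Psi_sub_Psi_take (N := N) (W := W) u hd
  simp only [mul_div_assoc] at hsum
  constructor
  · have : 0 ≤ ∑ i ∈ Finset.Ico d u.length, W (u.take i) * ((u.getD i 0 : ℝ) / (N - 1)) :=
      Finset.sum_nonneg fun i _ => mul_nonneg (hW i).le (hletter i).1
    linarith
  · have : ∑ i ∈ Finset.Ico d u.length, W (u.take i) * ((u.getD i 0 : ℝ) / (N - 1))
        ≤ W (u.take d) / (1 - ε) :=
      calc _ = ∑ k ∈ Finset.range (u.length - d), W (u.take (d + k)) *
            ((u.getD (d + k) 0 : ℝ) / (N - 1)) := Finset.sum_Ico_eq_sum_range _ _ _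
        _ ≤ ∑ k ∈ Finset.range (u.length - d), ε ^ k * W (u.take d) := by
          refine Finset.sum_le_sum fun k hk => ?_
          have hk : d + k ≤ u.length := by rw [Finset.mem_range] at hk; omega
          calc _ ≤ W (u.take (d + k)) := mul_le_of_le_one_right (hW _).le (hletter _).2
            _ ≤ ε ^ k * W (u.take d) := W_take_add_le hV.2.1 hRD hε₀ hu d k hk
        _ = (∑ k ∈ Finset.Ico 0 (u.length - d), ε ^ k) * W (u.take d) := by
          rw [Finset.sum_mul, Finset.range_eq_Ico]
        _ ≤ ε ^ 0 / (1 - ε) * W (u.take d) :=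
          mul_le_mul_of_nonneg_right (geom_sum_Ico_le_of_lt_one hε₀ hε₁) (hW d).le
        _ = W (u.take d) / (1 - ε) := by ring
    linarith

lemma W_le_of_prefix (hV : ∀ v ∈ V, ∀ u, u <+: v → u ∈ V) (hRD : RadiallyDecaying V W ε)
    (hε₀ : 0 ≤ ε) (hε₁ : ε ≤ 1) {p u : List ℕ} (hu : u ∈ V) (hp : p <+: u) : W u ≤ W p := by
  obtain ⟨d, hd, rfl⟩ : ∃ d ≤ u.length, p = u.take d :=
    ⟨_, hp.length_le, List.prefix_iff_eq_take.1 hp⟩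
  have h := W_take_add_le hV hRD hε₀ hu d (u.length - d) (by omega)
  rw [Nat.add_sub_cancel' hd, List.take_length] at h
  exact h.trans (mul_le_of_le_one_left (hRD.2.1 _ (hV u hu _ (List.take_prefix _ _))).le
    (pow_le_one₀ hε₀ hε₁))

lemma W_append_singleton_le (hRD : RadiallyDecaying V W ε)
    {p : List ℕ} {a : ℕ} (hp : p ++ [a] ∈ V) : W (p ++ [a]) ≤ ε * W p := by
  simpa using hRD.2.2 _ hp (by simp)

lemma W_le_abs_Psi_sub_Psi (hN : 2 ≤ N) (hV : IsNaryTree N V) (hRD : RadiallyDecaying V W ε)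
    (hε₀ : 0 ≤ ε) (hεN : 3 * ε * (N - 1) ≤ 1) {u v : List ℕ} (hu : u ∈ V) (hv : v ∈ V)
    (huv : ¬ u <+: v) (hvu : ¬ v <+: u) : W v ≤ |Psi N W u - Psi N W v| := by
  obtain ⟨c, a, b, s, t, hab, rfl, rfl⟩ := List.exists_eq_append_cons_of_not_prefix huv hvu
  have hNR : (2 : ℝ) ≤ N := by exact_mod_cast hN
  have hε₂ : ε ≤ 1 / 3 := by nlinarith
  have hpa : c ++ [a] <+: c ++ a :: s := ⟨s, by simp⟩
  have hpb : c ++ [b] <+: c ++ b :: t := ⟨t, by simp⟩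
  have hca : c ++ [a] ∈ V := hV.2.1 _ hu _ hpa
  have hcb : c ++ [b] ∈ V := hV.2.1 _ hv _ hpb
  have hWc : 0 < W c := hRD.2.1 c (hV.2.1 _ hu _ ⟨_, rfl⟩)
  have hWa := W_append_singleton_le hRD hca
  have hWb := W_append_singleton_le hRD hcb
  have hWv := W_le_of_prefix hV.2.1 hRD hε₀ (by linarith) hv hpb
  have hgap : 3 * ε * W c ≤ |Psi N W (c ++ [a]) - Psi N W (c ++ [b])| :=
    le_trans (by rw [le_div_iff₀ (by linarith)]; nlinarith)
      (div_le_abs_Psi_append_sub hN hWc.le hab)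
  obtain ⟨hu₁, hu₂⟩ := Psi_mem_Icc_of_prefix hN hV hRD hε₀ (by linarith) hu hpa
  obtain ⟨hv₁, hv₂⟩ := Psi_mem_Icc_of_prefix hN hV hRD hε₀ (by linarith) hv hpb
  -- the subtrees below `c ++ [a]` and `c ++ [b]` move `Psi` by at most `2 ε W c`
  have hdiv : ∀ x : ℝ, 0 ≤ x → x / (1 - ε) ≤ 2 * x := fun x hx => by
    rw [div_le_iff₀ (by linarith)]; nlinarith
  have ha := hdiv _ (hRD.2.1 _ hca).le
  have hb := hdiv _ (hRD.2.1 _ hcb).le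
  have hclose : |Psi N W (c ++ [a]) - Psi N W (c ++ [b]) -
      (Psi N W (c ++ a :: s) - Psi N W (c ++ b :: t))| ≤ 2 * ε * W c :=
    abs_le.2 ⟨by linarith, by linarith⟩
  linarith [abs_sub_abs_le_abs_sub (Psi N W (c ++ [a]) - Psi N W (c ++ [b]))
    (Psi N W (c ++ a :: s) - Psi N W (c ++ b :: t))]

lemma Psi_mem_Icc (hN : 2 ≤ N) (hV : IsNaryTree N V) (hRD : RadiallyDecaying V W ε)
    (hε₀ : 0 ≤ ε) (hε₁ : ε < 1) {u : List ℕ} (hu : u ∈ V) :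
    Psi N W u ∈ Set.Icc 0 (1 / (1 - ε)) := by
  simpa [Psi, hRD.1] using Psi_mem_Icc_of_prefix hN hV hRD hε₀ hε₁ hu List.nil_prefix

lemma le_infDist_E2set_diff (hN : 2 ≤ N) (hV : IsNaryTree N V) (hD : DepthAtLeastOne V)
    (hRD : RadiallyDecaying V W ε) (hε₀ : 0 ≤ ε) (hεN : 3 * ε * (N - 1) ≤ 1) {v : List ℕ}
    (hv : IsLeaf V v) :
    W v ≤ infDist (pt (Psi N W v) (W v)) (E2set N V W \ {pt (Psi N W v) (W v)}) := by
  have hsep : ∀ u, IsLeaf V u → u ≠ v → W v ≤ |Psi N W v - Psi N W u| := fun u hu huv => by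
    rw [abs_sub_comm]
    exact W_le_abs_Psi_sub_Psi hN hV hRD hε₀ hεN hu.1 hv.1 (hu.not_prefix_s5 hV.2.1 hv.1 huv)
      (hv.not_prefix_s5 hV.2.1 hu.1 huv.symm)
  obtain ⟨u, hu, huv⟩ := exists_isLeaf_ne hV hD v
  have hne : pt (Psi N W u) (W u) ≠ pt (Psi N W v) (W v) := fun h => by
    have := hsep u hu huv
    rw [← pt_zero (Psi N W u) (W u), h, pt_zero, sub_self, abs_zero] at this
    exact (hRD.2.1 v hv.1).not_ge this
  have hmem : pt (Psi N W u) (W u) ∈ E2set N V W \ {pt (Psi N W v) (W v)} := ⟨⟨u, hu, rfl⟩, hne⟩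
  refine (le_infDist ⟨_, hmem⟩).2 ?_
  rintro _ ⟨⟨w, hw, rfl⟩, hwv⟩
  have hwv : w ≠ v := by rintro rfl; exact hwv rfl
  exact (hsep w hw hwv).trans (abs_sub_apply_le_dist (pt _ _) (pt _ _) 0)

end Tree

/-- part 3 of Lemma 3 of the paper. -/
theorem statement5 :
    ∃ k₀ : ℝ, 0 < k₀ ∧
      ∀ (N : ℕ) (V : Finset (List ℕ)) (W : List ℕ → ℝ) (ε : ℝ),
        TreeHyp k₀ N V W ε → DepthAtLeastOne V →
          ∀ x ∈ E2set N V W,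
            Delta V W ≤ x 1 ∧
            x 1 ≤ infDist x (E1set (Delta V W)) ∧
            infDist x (E1set (Delta V W)) ≤ 2 * x 1 ∧
            x 1 ≤ infDist x (E2set N V W \ {x}) := by
  refine ⟨1 / 5, by norm_num, ?_⟩
  rintro N V W ε ⟨hN, hV, hε, hεk, hRD⟩ hD _ ⟨v, hv, rfl⟩
  have hNR : (2 : ℝ) ≤ N := by exact_mod_cast hN
  have hεN : ε * N ≤ 1 / 5 := (le_div_iff₀ (by positivity)).1 hεk
  have hε₁ : ε ≤ 1 / 10 := by nlinarith
  obtain ⟨hΨ₀, hΨ₁⟩ := Psi_mem_Icc hN hV hRD hε.le (by linarith) hv.1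
  have hΨ₂ : Psi N W v < 2 := hΨ₁.trans_lt ((div_lt_iff₀ (by linarith)).2 (by linarith))
  exact ⟨Delta_le hv, le_infDist_E1set (pt _ _) _,
    infDist_pt_E1set_le (Delta_pos hV.1 hRD) hΨ₀ hΨ₂ (Delta_le hv),
    le_infDist_E2set_diff hN hV hD hRD hε.le (by nlinarith) hv⟩
end
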